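/- For θ, θ̃ ∈ (0, π), the matrix S = [[1, (cos θ̃ - cos θ)/sin θ], [0, sin θ̃/sin θ]] satisfies: the eigenvalues of SSᵀ are exactly (cos θ̃ - 1)/(cos θ - 1) and (cos θ̃ + 1)/(cos θ + 1). -/

import Mathlib

/-!
The matrix `S * Sᵀ` is `2 × 2`, so its eigenvalues are the roots of `X² - tr X + det`.
With `c = (cos θ' - cos θ) / sin θ` and `s = sin θ' / sin θ` we have `tr = 1 + c² + s²` and
`det = s²`, and `sin² = 1 - cos²` shows that the two claimed values have exactly this sum and
product.
-/

open Real Matrix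

namespace Matrix

variable {𝕜 : Type*} [RCLike 𝕜]

theorem hasEigenvalue_toEuclideanLin_iff_isRoot_charpoly {n : Type*} [Fintype n] [DecidableEq n]
    (A : Matrix n n 𝕜) (μ : 𝕜) :
    Module.End.HasEigenvalue (toEuclideanLin A) μ ↔ A.charpoly.IsRoot μ := by
  rw [Module.End.hasEigenvalue_iff_mem_spectrum, ← mem_spectrum_iff_isRoot_charpoly,
    ← spectrum_toLpLin 2]

open Polynomial in
theorem hasEigenvalue_toEuclideanLin_fin_two_iff (A : Matrix (Fin 2) (Fin 2) 𝕜) {a b : 𝕜}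
    (htrace : A.trace = a + b) (hdet : A.det = a * b) (μ : 𝕜) :
    Module.End.HasEigenvalue (toEuclideanLin A) μ ↔ μ = a ∨ μ = b := by
  have hcharpoly : A.charpoly = (X - C a) * (X - C b) := by
    rw [charpoly_fin_two, htrace, hdet, C_add, C_mul]
    ring
  rw [hasEigenvalue_toEuclideanLin_iff_isRoot_charpoly, hcharpoly, IsRoot, eval_mul,
    mul_eq_zero, eval_sub, eval_sub, eval_X, eval_C, eval_C, sub_eq_zero, sub_eq_zero]

theorem trace_mul_transpose_of_upper_fin_two {R : Type*} [CommRing R] (p c s : R) :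
    (!![p, c; 0, s] * !![p, c; 0, s]ᵀ).trace = p ^ 2 + c ^ 2 + s ^ 2 := by
  simp [trace_fin_two, vecMul, dotProduct, Fin.sum_univ_two]
  ring

theorem det_mul_transpose_of_upper_fin_two {R : Type*} [CommRing R] (p c s : R) :
    (!![p, c; 0, s] * !![p, c; 0, s]ᵀ).det = (p * s) ^ 2 := by
  rw [det_mul, det_transpose, det_fin_two_of]
  ring

end Matrix

namespace Real

theorem cos_sub_one_div_mul_cos_add_one_div (θ θ' : ℝ) :
    (cos θ' - 1) / (cos θ - 1) * ((cos θ' + 1) / (cos θ + 1)) = (sin θ' / sin θ) ^ 2 := by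
  rw [div_mul_div_comm, div_pow, ← neg_div_neg_eq, sin_sq, sin_sq]
  ring

theorem cos_sub_one_div_add_cos_add_one_div {θ : ℝ} (hθ : sin θ ≠ 0) (θ' : ℝ) :
    (cos θ' - 1) / (cos θ - 1) + (cos θ' + 1) / (cos θ + 1) =
      1 + ((cos θ' - cos θ) / sin θ) ^ 2 + (sin θ' / sin θ) ^ 2 := by
  obtain ⟨hcos₁, hcos₂⟩ : cos θ ≠ 1 ∧ cos θ ≠ -1 := by
    rwa [Ne, sin_eq_zero_iff_cos_eq, not_or] at hθ
  have : cos θ - 1 ≠ 0 := sub_ne_zero.2 hcos₁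
  have : cos θ + 1 ≠ 0 := by rwa [← sub_neg_eq_add, sub_ne_zero]
  field_simp
  linear_combination (2 * cos θ' * cos θ - cos θ ^ 2 - 1) * sin_sq_add_cos_sq θ
    - (cos θ ^ 2 - 1) * sin_sq_add_cos_sq θ'

end Real

theorem eigenvalues_SST_general (θ θ' : ℝ) (hθ : θ ∈ Set.Ioo 0 π) :
    let S : Matrix (Fin 2) (Fin 2) ℝ :=
      !![1, (Real.cos θ' - Real.cos θ) / Real.sin θ; 0, Real.sin θ' / Real.sin θ]
    ∀ μ : ℝ, Module.End.HasEigenvalue (Matrix.toEuclideanLin (S * Sᵀ)) μ ↔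
      μ = (Real.cos θ' - 1) / (Real.cos θ - 1) ∨
      μ = (Real.cos θ' + 1) / (Real.cos θ + 1) := by
  intro S
  have hsin : sin θ ≠ 0 := (sin_pos_of_pos_of_lt_pi hθ.1 hθ.2).ne'
  apply hasEigenvalue_toEuclideanLin_fin_two_iff
  · rw [trace_mul_transpose_of_upper_fin_two, cos_sub_one_div_add_cos_add_one_div hsin, one_pow]
  · rw [det_mul_transpose_of_upper_fin_two, cos_sub_one_div_mul_cos_add_one_div, one_mul]

/-- For `θ, θ̃ ∈ (0, π)` and
`S = [[1, (cos θ̃ - cos θ)/sin θ], [0, sin θ̃/sin θ]]`, the eigenvalues of `S * Sᵀ`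
are exactly `(cos θ̃ - 1)/(cos θ - 1)` and `(cos θ̃ + 1)/(cos θ + 1)`. -/
theorem eigenvalues_SST (θ θ' : ℝ) (hθ : θ ∈ Set.Ioo 0 π) (hθ' : θ' ∈ Set.Ioo 0 π) :
    let S : Matrix (Fin 2) (Fin 2) ℝ :=
      !![1, (Real.cos θ' - Real.cos θ) / Real.sin θ; 0, Real.sin θ' / Real.sin θ]
    ∀ μ : ℝ, Module.End.HasEigenvalue (Matrix.toEuclideanLin (S * Sᵀ)) μ ↔
      μ = (Real.cos θ' - 1) / (Real.cos θ - 1) ∨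
      μ = (Real.cos θ' + 1) / (Real.cos θ + 1) :=
  eigenvalues_SST_general θ θ' hθ
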